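/- Let Z be a compact totally disconnected metric space and let a group Γ act on Z by homeomorphisms. Then the Γ-invariant finite Borel measures on Z correspond bijectively to positive ℤ-linear homomorphisms from the coinvariants C(Z, ℤ)_Γ to ℝ, where C(Z, ℤ)_Γ is the quotient of C(Z, ℤ) by the subgroup generated by elements f − γ·f, and positivity means nonnegativity on the images of nonnegative functions. -/

import Mathlib

open MeasureTheory

/-- The subgroup of `C(Z, ℤ)` generated by the elements `f - γ·f`,
where `(γ·f)(z) = f(γ⁻¹ • z)`. -/
def coinvariantsSubgroup (Γ Z : Type*) [Group Γ] [TopologicalSpace Z] [MulAction Γ Z]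
    [ContinuousConstSMul Γ Z] : AddSubgroup C(Z, ℤ) :=
  AddSubgroup.closure
    {g | ∃ (f : C(Z, ℤ)) (γ : Γ),
      g = f - f.comp ⟨fun z => γ⁻¹ • z, continuous_const_smul γ⁻¹⟩}

/-!
Every `f ∈ C(Z, ℤ)` has finite range and clopen fibres, so it is a finite `ℤ`-combination of
indicators of clopen sets, and an additive map on `C(Z, ℤ)` is determined by its values on
these. Given a positive `ψ`, the outer value `K ↦ inf {ψ 1_U | U clopen, K ⊆ U}` is a content
(disjoint compact sets are separated by a clopen set), and its measure `μ` has `μ U = ψ 1_U` on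
clopen sets, hence `∫ f dμ = ψ f`. Conversely, clopen sets form a basis, so they generate the Borel
σ-algebra of the second countable space `Z` and a finite measure is determined by its integrals.
Under this correspondence `μ` is `Γ`-invariant iff `∫ f ∘ γ⁻¹ dμ = ∫ f dμ` for all `f` and `γ`,
i.e. iff integration against `μ` factors through the coinvariants.
-/

open Set
open scoped NNReal

section Indicator

variable {Z : Type*} [TopologicalSpace Z]

noncomputable def clopenIndicator {U : Set Z} (hU : IsClopen U) : C(Z, ℤ) :=
  LocallyConstant.charFn ℤ hU

lemma coe_clopenIndicator {U : Set Z} (hU : IsClopen U) :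
    ⇑(clopenIndicator hU) = U.indicator 1 :=
  LocallyConstant.coe_charFn ℤ hU

lemma clopenIndicator_nonneg {U : Set Z} (hU : IsClopen U) : 0 ≤ clopenIndicator hU :=
  ContinuousMap.le_def.2 <| by
    rw [coe_clopenIndicator]; exact Set.indicator_nonneg fun _ _ => zero_le_one

lemma clopenIndicator_mono {U V : Set Z} (hU : IsClopen U) (hV : IsClopen V) (hUV : U ⊆ V) :
    clopenIndicator hU ≤ clopenIndicator hV :=
  ContinuousMap.le_def.2 <| by
    rw [coe_clopenIndicator, coe_clopenIndicator]
    exact Set.indicator_le_indicator_of_subset hUV fun _ => zero_le_one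

lemma clopenIndicator_union_le {U V : Set Z} (hU : IsClopen U) (hV : IsClopen V) :
    clopenIndicator (hU.union hV) ≤ clopenIndicator hU + clopenIndicator hV :=
  ContinuousMap.le_def.2 fun z => by
    by_cases hzU : z ∈ U <;> by_cases hzV : z ∈ V <;> simp [coe_clopenIndicator, hzU, hzV]

lemma clopenIndicator_inter_add_diff {U W : Set Z} (hU : IsClopen U) (hW : IsClopen W) :
    clopenIndicator (hU.inter hW) + clopenIndicator (hU.diff hW) = clopenIndicator hU := by
  ext z
  by_cases hzU : z ∈ U <;> by_cases hzW : z ∈ W <;>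
    simp [coe_clopenIndicator, hzU, hzW]

theorem addMonoidHom_ext_clopenIndicator [CompactSpace Z] {M : Type*} [AddCommGroup M]
    {ψ₁ ψ₂ : C(Z, ℤ) →+ M}
    (h : ∀ (U : Set Z) (hU : IsClopen U), ψ₁ (clopenIndicator hU) = ψ₂ (clopenIndicator hU)) :
    ψ₁ = ψ₂ := by
  ext f
  have hfin : (range f).Finite := (isCompact_range f.continuous).finite_of_discrete
  have hfiber (n : ℤ) : IsClopen (f ⁻¹' {n}) := (isClopen_discrete {n}).preimage f.continuous
  have hf : f = ∑ n ∈ hfin.toFinset, n • clopenIndicator (hfiber n) := by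
    ext z
    simp [coe_clopenIndicator, Set.indicator]
  rw [hf, map_sum, map_sum]
  exact Finset.sum_congr rfl fun n _ => by rw [map_zsmul, map_zsmul, h]

end Indicator

section Integral

variable {Z : Type*} [TopologicalSpace Z] [CompactSpace Z] [MeasurableSpace Z] [BorelSpace Z]

lemma integrable_intCast (μ : Measure Z) [IsFiniteMeasure μ] (f : C(Z, ℤ)) :
    Integrable (fun z => (f z : ℝ)) μ :=
  (continuous_of_discreteTopology.comp f.continuous).integrable_of_hasCompactSupport
    (HasCompactSupport.of_compactSpace _)

noncomputable def integralAddHom (μ : Measure Z) [IsFiniteMeasure μ] : C(Z, ℤ) →+ ℝ where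
  toFun f := ∫ z, (f z : ℝ) ∂μ
  map_zero' := by simp
  map_add' f g := by
    simp only [ContinuousMap.add_apply, Int.cast_add]
    exact integral_add (integrable_intCast μ f) (integrable_intCast μ g)

lemma integralAddHom_apply (μ : Measure Z) [IsFiniteMeasure μ] (f : C(Z, ℤ)) :
    integralAddHom μ f = ∫ z, (f z : ℝ) ∂μ := rfl

lemma integralAddHom_clopenIndicator (μ : Measure Z) [IsFiniteMeasure μ] {U : Set Z}
    (hU : IsClopen U) : integralAddHom μ (clopenIndicator hU) = μ.real U := by
  rw [integralAddHom_apply, coe_clopenIndicator, ← integral_indicator_one hU.isOpen.measurableSet]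
  congr 1 with z
  by_cases hz : z ∈ U <;> simp [hz]

lemma integralAddHom_nonneg (μ : Measure Z) [IsFiniteMeasure μ] {f : C(Z, ℤ)} (hf : 0 ≤ f) :
    0 ≤ integralAddHom μ f :=
  integral_nonneg fun z => Int.cast_nonneg_iff.mpr (ContinuousMap.le_def.1 hf z)

lemma integralAddHom_comp (μ : Measure Z) [IsFiniteMeasure μ] (f : C(Z, ℤ)) (g : C(Z, Z)) :
    integralAddHom μ (f.comp g) = integralAddHom (μ.map g) f :=
  (integral_map g.continuous.aemeasurable
    (continuous_of_discreteTopology.comp f.continuous).aestronglyMeasurable).symm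

variable [T2Space Z] [TotallyDisconnectedSpace Z]

theorem MeasureTheory.Measure.ext_of_isClopen [SecondCountableTopology Z] {μ ν : Measure Z}
    [IsFiniteMeasure μ] (h : ∀ U, IsClopen U → μ U = ν U) : μ = ν :=
  ext_of_generate_finite {U | IsClopen U}
    (by rw [‹BorelSpace Z›.measurable_eq, isTopologicalBasis_isClopen.borel_eq_generateFrom])
    (fun _ hs _ ht _ => IsClopen.inter hs ht) h (h univ isClopen_univ)

theorem eq_of_integralAddHom_eq [SecondCountableTopology Z] {μ ν : Measure Z}
    [IsFiniteMeasure μ] [IsFiniteMeasure ν] (h : integralAddHom μ = integralAddHom ν) : μ = ν :=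
  Measure.ext_of_isClopen fun U hU => by
    have := DFunLike.congr_fun h (clopenIndicator hU)
    rwa [integralAddHom_clopenIndicator, integralAddHom_clopenIndicator,
      measureReal_eq_measureReal_iff] at this

end Integral

section Content

variable {Z : Type*} [TopologicalSpace Z] (ψ : C(Z, ℤ) →+ ℝ)

noncomputable def clopenOuterValue (K : Set Z) : ℝ≥0 :=
  ⨅ U : {U : Set Z // IsClopen U ∧ K ⊆ U}, (ψ (clopenIndicator U.2.1)).toNNReal

instance (K : Set Z) : Nonempty {U : Set Z // IsClopen U ∧ K ⊆ U} :=
  ⟨⟨univ, isClopen_univ, subset_univ K⟩⟩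

lemma clopenOuterValue_le {K U : Set Z} (hU : IsClopen U) (hKU : K ⊆ U) :
    clopenOuterValue ψ K ≤ (ψ (clopenIndicator hU)).toNNReal :=
  ciInf_le (OrderBot.bddBelow _) (⟨U, hU, hKU⟩ : {U : Set Z // IsClopen U ∧ K ⊆ U})

lemma clopenOuterValue_mono {K₁ K₂ : Set Z} (h : K₁ ⊆ K₂) :
    clopenOuterValue ψ K₁ ≤ clopenOuterValue ψ K₂ :=
  le_ciInf fun U => clopenOuterValue_le ψ U.2.1 (h.trans U.2.2)

variable {ψ} (hψ : Monotone ψ)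
include hψ

lemma clopenOuterValue_of_isClopen {U : Set Z} (hU : IsClopen U) :
    clopenOuterValue ψ U = (ψ (clopenIndicator hU)).toNNReal :=
  (clopenOuterValue_le ψ hU subset_rfl).antisymm <|
    le_ciInf fun V => Real.toNNReal_le_toNNReal <| hψ <| clopenIndicator_mono hU V.2.1 V.2.2

lemma clopenOuterValue_union_le (K₁ K₂ : Set Z) :
    clopenOuterValue ψ (K₁ ∪ K₂) ≤ clopenOuterValue ψ K₁ + clopenOuterValue ψ K₂ :=
  NNReal.le_iInf_add_iInf fun U₁ U₂ => calc
    clopenOuterValue ψ (K₁ ∪ K₂)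
      ≤ (ψ (clopenIndicator (U₁.2.1.union U₂.2.1))).toNNReal :=
        clopenOuterValue_le ψ _ (union_subset_union U₁.2.2 U₂.2.2)
    _ ≤ (ψ (clopenIndicator U₁.2.1) + ψ (clopenIndicator U₂.2.1)).toNNReal := by
        rw [← map_add]; exact Real.toNNReal_le_toNNReal (hψ (clopenIndicator_union_le _ _))
    _ ≤ _ := Real.toNNReal_add_le

lemma clopenOuterValue_union_of_disjoint [CompactSpace Z] [T2Space Z] [TotallyDisconnectedSpace Z]
    {K₁ K₂ : Set Z} (hK₁ : IsClosed K₁) (hK₂ : IsClosed K₂) (hd : Disjoint K₁ K₂) :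
    clopenOuterValue ψ (K₁ ∪ K₂) = clopenOuterValue ψ K₁ + clopenOuterValue ψ K₂ := by
  refine (clopenOuterValue_union_le hψ K₁ K₂).antisymm (le_ciInf fun U => ?_)
  obtain ⟨W, hW, hK₁W, hWK₂⟩ :=
    exists_clopen_of_closed_subset_open hK₁ hK₂.isOpen_compl hd.subset_compl_right
  have hnonneg {V : Set Z} (hV : IsClopen V) : 0 ≤ ψ (clopenIndicator hV) := by
    simpa using hψ (clopenIndicator_nonneg hV)
  calc clopenOuterValue ψ K₁ + clopenOuterValue ψ K₂
      ≤ (ψ (clopenIndicator (U.2.1.inter hW))).toNNReal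
          + (ψ (clopenIndicator (U.2.1.diff hW))).toNNReal :=
        add_le_add
          (clopenOuterValue_le ψ _ (subset_inter (subset_union_left.trans U.2.2) hK₁W))
          (clopenOuterValue_le ψ _ (subset_sdiff.2 ⟨subset_union_right.trans U.2.2,
            disjoint_compl_right.mono_right hWK₂⟩))
    _ = (ψ (clopenIndicator U.2.1)).toNNReal := by
        rw [← Real.toNNReal_add (hnonneg _) (hnonneg _), ← map_add,
          clopenIndicator_inter_add_diff U.2.1 hW]

end Content

section Measure

variable {Z : Type*} [TopologicalSpace Z] [CompactSpace Z] [T2Space Z] [TotallyDisconnectedSpace Z]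
  {ψ : C(Z, ℤ) →+ ℝ}

noncomputable def clopenContent (hψ : Monotone ψ) : Content Z where
  toFun K := clopenOuterValue ψ K
  mono' _ _ h := clopenOuterValue_mono ψ h
  sup_disjoint' _ _ hd hK₁ hK₂ := clopenOuterValue_union_of_disjoint hψ hK₁ hK₂ hd
  sup_le' K₁ K₂ := clopenOuterValue_union_le hψ K₁ K₂

variable [MeasurableSpace Z] [BorelSpace Z]

lemma clopenContent_measure_apply (hψ : Monotone ψ) {U : Set Z} (hU : IsClopen U) :
    (clopenContent hψ).measure U = ENNReal.ofReal (ψ (clopenIndicator hU)) := by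
  rw [Content.measure_apply _ hU.isOpen.measurableSet,
    Content.outerMeasure_of_isOpen _ U hU.isOpen,
    Content.innerContent_of_isCompact _ hU.isClosed.isCompact hU.isOpen]
  exact congrArg ENNReal.ofNNReal (clopenOuterValue_of_isClopen hψ hU)

instance (hψ : Monotone ψ) : IsFiniteMeasure (clopenContent hψ).measure :=
  ⟨by rw [clopenContent_measure_apply hψ isClopen_univ]; exact ENNReal.ofReal_lt_top⟩

theorem integralAddHom_clopenContent_measure (hψ : Monotone ψ) :
    integralAddHom (clopenContent hψ).measure = ψ :=
  addMonoidHom_ext_clopenIndicator fun U hU => by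
    rw [integralAddHom_clopenIndicator, measureReal_def, clopenContent_measure_apply hψ hU,
      ENNReal.toReal_ofReal (by simpa using hψ (clopenIndicator_nonneg hU))]

end Measure

section Action

variable {Γ Z : Type*} [Group Γ] [TopologicalSpace Z] [CompactSpace Z] [T2Space Z]
  [TotallyDisconnectedSpace Z] [SecondCountableTopology Z] [MeasurableSpace Z] [BorelSpace Z]
  [MulAction Γ Z] [ContinuousConstSMul Γ Z]

theorem smulInvariantMeasure_iff_coinvariantsSubgroup_le_ker (μ : Measure Z) [IsFiniteMeasure μ] :
    SMulInvariantMeasure Γ Z μ ↔ coinvariantsSubgroup Γ Z ≤ (integralAddHom μ).ker := by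
  have hmap (γ : Γ) : μ.map (γ⁻¹ • ·) = μ ↔ ∀ f : C(Z, ℤ),
      integralAddHom μ (f.comp ⟨fun z => γ⁻¹ • z, continuous_const_smul γ⁻¹⟩) =
        integralAddHom μ f := by
    simp only [integralAddHom_comp, ContinuousMap.coe_mk]
    exact ⟨fun h f => by simp only [h], fun h => eq_of_integralAddHom_eq (AddMonoidHom.ext h)⟩
  have htfae := (smulInvariantMeasure_tfae Γ μ).out 0 5
  rw [htfae, inv_surjective.forall, coinvariantsSubgroup, AddSubgroup.closure_le]
  simp only [hmap, Set.subset_def, Set.mem_ofPred_eq, forall_exists_index, SetLike.mem_coe,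
    AddMonoidHom.mem_ker]
  constructor
  · rintro h _ f γ rfl
    rw [map_sub, h, sub_self]
  · exact fun h γ f => (sub_eq_zero.1 ((map_sub _ _ _).symm.trans (h _ f γ rfl))).symm

end Action

/-- For a compact totally disconnected metric space `Z` with an action of a
group `Γ` by homeomorphisms, the `Γ`-invariant finite Borel measures on `Z` correspond
bijectively to positive `ℤ`-linear homomorphisms from the coinvariants `C(Z,ℤ)_Γ` to `ℝ`,
the correspondence being induced by integration. -/
theorem stmt1 (Γ Z : Type*) [Group Γ] [MetricSpace Z] [CompactSpace Z]
    [TotallyDisconnectedSpace Z] [MeasurableSpace Z] [BorelSpace Z]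
    [MulAction Γ Z] [ContinuousConstSMul Γ Z] :
    ∃ e : {μ : Measure Z // IsFiniteMeasure μ ∧
            ∀ (γ : Γ) (A : Set Z), MeasurableSet A → μ ((γ • ·) '' A) = μ A} ≃
        {φ : C(Z, ℤ) ⧸ coinvariantsSubgroup Γ Z →+ ℝ //
            ∀ f : C(Z, ℤ), (∀ z, 0 ≤ f z) → 0 ≤ φ (QuotientAddGroup.mk f)},
      ∀ (μ : {μ : Measure Z // IsFiniteMeasure μ ∧
            ∀ (γ : Γ) (A : Set Z), MeasurableSet A → μ ((γ • ·) '' A) = μ A})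
        (f : C(Z, ℤ)),
        (e μ : C(Z, ℤ) ⧸ coinvariantsSubgroup Γ Z →+ ℝ) (QuotientAddGroup.mk f)
          = ∫ z, (f z : ℝ) ∂μ.1 := by
  have hinv (μ : Measure Z) [IsFiniteMeasure μ] :
      (∀ (γ : Γ) (A : Set Z), MeasurableSet A → μ ((γ • ·) '' A) = μ A) ↔
        coinvariantsSubgroup Γ Z ≤ (integralAddHom μ).ker := by
    have htfae := (smulInvariantMeasure_tfae Γ μ).out 0 2
    exact htfae.symm.trans (smulInvariantMeasure_iff_coinvariantsSubgroup_le_ker μ)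
  refine ⟨Equiv.ofBijective (fun μ => haveI := μ.2.1
    ⟨QuotientAddGroup.lift _ (integralAddHom μ.1) ((hinv μ.1).1 μ.2.2),
      fun f hf => integralAddHom_nonneg μ.1 (ContinuousMap.le_def.2 hf)⟩) ⟨?_, ?_⟩, fun _ _ => rfl⟩
  · intro μ ν h
    have := μ.2.1
    have := ν.2.1
    exact Subtype.ext <| eq_of_integralAddHom_eq <|
      AddMonoidHom.ext fun f => DFunLike.congr_fun (congrArg Subtype.val h) (QuotientAddGroup.mk f)
  · rintro ⟨φ, hφ⟩
    have hψ : Monotone (φ.comp (QuotientAddGroup.mk' _)) :=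
      (monotone_iff_map_nonneg _).2 fun f hf => hφ f (ContinuousMap.le_def.1 hf)
    have hker : coinvariantsSubgroup Γ Z ≤ (integralAddHom (clopenContent hψ).measure).ker := by
      rw [integralAddHom_clopenContent_measure]
      exact fun g hg => by simp [(QuotientAddGroup.eq_zero_iff g).2 hg]
    exact ⟨⟨(clopenContent hψ).measure, inferInstance, (hinv _).2 hker⟩,
      Subtype.ext (QuotientAddGroup.addMonoidHom_ext _ (integralAddHom_clopenContent_measure hψ))⟩
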